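/- arXiv:1602.06173 — 2 statements merged into one kernel-verified Lean document; each statement's English description precedes it below -/
import Mathlib

section
/- The sequence (q_n)_{n≥1} is strictly increasing and converges to the Komornik–Loreti constant q_KL as n → ∞. -/
open Filter Topology

noncomputable section

/-- The value `Σ_{i≥0} d i / q^(i+1)` of a (0-indexed) digit sequence `d` in base `q`;
this corresponds to `((d_i)_{i≥1})_q` with `d_i = d (i-1)`. -/
def seqVal (q : ℝ) (d : ℕ → ℕ) : ℝ := ∑' i : ℕ, (d i : ℝ) / q ^ (i + 1)

/-- `d` is a `q`-expansion of `x` with digits in `{0,1}`. -/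
def IsExpansion (q x : ℝ) (d : ℕ → ℕ) : Prop :=
  (∀ i, d i ≤ 1) ∧ x = seqVal q d

/-- `x` has a unique `q`-expansion. -/
def HasUniqueExpansion (q x : ℝ) : Prop := ∃! d : ℕ → ℕ, IsExpansion q x d

/-- The set `U(x)` of univoque bases of `x`. -/
def UBases (x : ℝ) : Set ℝ := {q | 1 < q ∧ q < 2 ∧ HasUniqueExpansion q x}

/-- `q_s(x) = inf U(x)`. -/
def qs (x : ℝ) : ℝ := sInf (UBases x)

/-- The univoque set `U_q` of `x ∈ [0, 1/(q-1)]` with a unique `q`-expansion. -/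
def Uset (q : ℝ) : Set ℝ :=
  {x | x ∈ Set.Icc 0 (1 / (q - 1)) ∧ HasUniqueExpansion q x}

/-- The set `U_q'` of digit sequences which are the unique `q`-expansion of their value. -/
def USeq (q : ℝ) : Set (ℕ → ℕ) :=
  {d | (∀ i, d i ≤ 1) ∧ ∀ e : ℕ → ℕ, IsExpansion q (seqVal q d) e → e = d}

/-- The Thue–Morse sequence: `τ 0 = 0`, `τ (2n) = τ n`, `τ (2n+1) = 1 - τ n`. -/
def IsThueMorse (τ : ℕ → ℕ) : Prop :=
  τ 0 = 0 ∧ (∀ n, τ (2 * n) = τ n) ∧ ∀ n, τ (2 * n + 1) = 1 - τ n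

/-- `q` is the Komornik–Loreti constant: the base in `(1,2)` with `1 = Σ_{i≥1} τ_i q^{-i}`. -/
def IsKL (τ : ℕ → ℕ) (q : ℝ) : Prop :=
  1 < q ∧ q < 2 ∧ (1 : ℝ) = ∑' i : ℕ, (τ (i + 1) : ℝ) / q ^ (i + 1)

/-- `Q` is the sequence of bases `q_n`: `Q 0 = 1` and for `n ≥ 1`, `Q n` is the root in
`(1,2)` of `1 = Σ_{i=1}^{2^n} τ_i q^{-i}`. -/
def IsBaseSeq (τ : ℕ → ℕ) (Q : ℕ → ℝ) : Prop :=
  Q 0 = 1 ∧ ∀ n, 1 ≤ n → 1 < Q n ∧ Q n < 2 ∧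
    (1 : ℝ) = ∑ i ∈ Finset.range (2 ^ n), (τ (i + 1) : ℝ) / (Q n) ^ (i + 1)

/-- `D_n = ⋃_{q ∈ (q_{n-1}, q_n]} U_q`. -/
def D (Q : ℕ → ℝ) (n : ℕ) : Set ℝ := ⋃ q ∈ Set.Ioc (Q (n - 1)) (Q n), Uset q

/-- The golden ratio. -/
def qG : ℝ := (1 + Real.sqrt 5) / 2

/-- Strict lexicographical order on digit sequences. -/
def seqLt (c d : ℕ → ℕ) : Prop := ∃ n, (∀ i, i < n → c i = d i) ∧ c n < d n

/-- The word `τ_1 ⋯ τ_m`. -/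
def tmPrefix (τ : ℕ → ℕ) (m : ℕ) : List ℕ := (List.range m).map fun i => τ (i + 1)

/-- `w⁻`: decrease the last digit of a word by 1. -/
def lastDec (w : List ℕ) : List ℕ := w.dropLast ++ [w.getLastD 0 - 1]

/-- `w⁺`: increase the last digit of a word by 1. -/
def lastInc (w : List ℕ) : List ℕ := w.dropLast ++ [w.getLastD 0 + 1]

/-- The reflection of a word. -/
def reflect (w : List ℕ) : List ℕ := w.map fun d => 1 - d

/-- The infinite sequence given by the prefix `p` followed by periodic repetition of `w`. -/
def prefPeriodic (p w : List ℕ) : ℕ → ℕ := fun j =>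
  if j < p.length then p.getD j 0 else w.getD ((j - p.length) % w.length) 0

/-- `z_n = ((τ_1⋯τ_{2^{n-1}})(τ_{2^{n-1}+1}⋯τ_{2^n})^∞)_{q_n}`. -/
def zVal (τ : ℕ → ℕ) (Q : ℕ → ℝ) (n : ℕ) : ℝ :=
  seqVal (Q n) (prefPeriodic (tmPrefix τ (2 ^ (n - 1)))
    ((List.range (2 ^ (n - 1))).map fun i => τ (2 ^ (n - 1) + (i + 1))))

/-- `z_{1,k} = Σ_{i=1}^k q_G^{-i} + 1/(q_G^k (q_G^2 - 1))`. -/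
def z1 (k : ℕ) : ℝ :=
  (∑ i ∈ Finset.range k, 1 / qG ^ (i + 1)) + 1 / (qG ^ k * (qG ^ 2 - 1))

/-! Write `f_N(q) = Σ_{i<N} τ_{i+1} q^{-(i+1)}` and `f = f_∞`; since `τ_1 = 1`, all of them are
strictly decreasing in `q`. As `τ_{2^(n+1)} = 1`,
`f_{2^(n+1)}(q_n) > f_{2^n}(q_n) = 1 = f_{2^(n+1)}(q_{n+1})`, so `q_n < q_{n+1}`; and
`f_{2^n}(q_KL) ≤ f(q_KL) = 1` gives `q_n ≤ q_KL`. The limit `L` of the increasing bounded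
sequence satisfies `f_{2^n}(L) ≤ f_{2^n}(q_n) = 1` for all `n`, hence `f(L) ≤ 1 = f(q_KL)`,
i.e. `q_KL ≤ L`. -/

open Finset Set

namespace IsThueMorse

variable {τ : ℕ → ℕ}

lemma le_one (hτ : IsThueMorse τ) (n : ℕ) : τ n ≤ 1 := by
  induction n using Nat.strong_induction_on with
  | _ n ih =>
    obtain ⟨m, rfl | rfl⟩ := Nat.even_or_odd' n
    · rcases m.eq_zero_or_pos with rfl | hm
      · simp [hτ.1]
      · rw [hτ.2.1]
        exact ih m (by omega)
    · rw [hτ.2.2]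
      exact Nat.sub_le 1 (τ m)

lemma apply_one (hτ : IsThueMorse τ) : τ 1 = 1 := by
  simpa [hτ.1] using hτ.2.2 0

lemma apply_two_pow (hτ : IsThueMorse τ) (k : ℕ) : τ (2 ^ k) = 1 := by
  induction k with
  | zero => exact hτ.apply_one
  | succ k ih => rwa [pow_succ, mul_comm, hτ.2.1]

end IsThueMorse

section DigitSums

variable {d : ℕ → ℕ} {q q' : ℝ}

lemma natCast_div_pow_le (a : ℕ) (hq : 0 < q) (hqq' : q ≤ q') (i : ℕ) :
    (a : ℝ) / q' ^ (i + 1) ≤ a / q ^ (i + 1) :=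
  div_le_div_of_nonneg_left a.cast_nonneg (by positivity) (pow_le_pow_left₀ hq.le hqq' _)

lemma natCast_div_pow_lt {a : ℕ} (ha : a ≠ 0) (hq : 0 < q) (hqq' : q < q') (i : ℕ) :
    (a : ℝ) / q' ^ (i + 1) < a / q ^ (i + 1) :=
  div_lt_div_of_pos_left (by positivity) (by positivity)
    (pow_lt_pow_left₀ hqq' hq.le i.succ_ne_zero)

lemma strictAntiOn_sum_range_div_pow {N k : ℕ} (hk : k < N) (hdk : d k ≠ 0) :
    StrictAntiOn (fun q : ℝ => ∑ i ∈ range N, (d i : ℝ) / q ^ (i + 1)) (Ioi 0) :=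
  fun _ hq _ _ hqq' => Finset.sum_lt_sum (fun i _ => natCast_div_pow_le _ hq hqq'.le i)
    ⟨k, mem_range.2 hk, natCast_div_pow_lt hdk hq hqq' k⟩

lemma sum_range_lt_sum_range_of_ne_zero {N k : ℕ} (hNk : N ≤ k) (hdk : d k ≠ 0) (hq : 0 < q) :
    ∑ i ∈ range N, (d i : ℝ) / q ^ (i + 1) < ∑ i ∈ range (k + 1), (d i : ℝ) / q ^ (i + 1) :=
  Finset.sum_lt_sum_of_subset (range_subset_range.2 (by omega)) (mem_range.2 k.lt_succ_self)
    (by simpa using hNk) (by positivity) (fun _ _ _ => by positivity)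

lemma summable_natCast_div_pow {M : ℕ} (hd : ∀ i, d i ≤ M) (hq : 1 < q) :
    Summable fun i => (d i : ℝ) / q ^ (i + 1) := by
  have hq0 : 0 < q := one_pos.trans hq
  have hgeom : Summable fun i : ℕ => (M : ℝ) * q⁻¹ ^ i :=
    (summable_geometric_of_lt_one (by positivity) (inv_lt_one_of_one_lt₀ hq)).mul_left _
  refine hgeom.of_nonneg_of_le (fun i => by positivity) fun i => ?_
  calc (d i : ℝ) / q ^ (i + 1) ≤ M / q ^ i :=
        div_le_div₀ (by positivity) (by exact_mod_cast hd i) (by positivity)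
          (pow_le_pow_right₀ hq.le i.le_succ)
    _ = M * q⁻¹ ^ i := by rw [div_eq_mul_inv, inv_pow]

lemma strictAntiOn_seqVal {M k : ℕ} (hd : ∀ i, d i ≤ M) (hdk : d k ≠ 0) :
    StrictAntiOn (fun q => seqVal q d) (Ioi 1) :=
  fun _ hq _ hq' hqq' => Summable.tsum_lt_tsum
    (fun i => natCast_div_pow_le _ (one_pos.trans hq) hqq'.le i)
    (natCast_div_pow_lt hdk (one_pos.trans hq) hqq' k)
    (summable_natCast_div_pow hd hq') (summable_natCast_div_pow hd hq)

end DigitSums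

section BaseSeq

variable {τ : ℕ → ℕ} {Q : ℕ → ℝ} {qKL q : ℝ}

lemma IsThueMorse.strictAntiOn_sum_range (hτ : IsThueMorse τ) {N : ℕ} (hN : 0 < N) :
    StrictAntiOn (fun q : ℝ => ∑ i ∈ range N, (τ (i + 1) : ℝ) / q ^ (i + 1)) (Ioi 0) :=
  strictAntiOn_sum_range_div_pow (d := fun i => τ (i + 1)) hN (by simp [hτ.apply_one])

lemma IsBaseSeq.lt_succ (hτ : IsThueMorse τ) (hQ : IsBaseSeq τ Q) {n : ℕ} (hn : 1 ≤ n) :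
    Q n < Q (n + 1) := by
  obtain ⟨hQn, -, hsum⟩ := hQ.2 n hn
  obtain ⟨hQn', -, hsum'⟩ := hQ.2 (n + 1) (by omega)
  have hlast : 2 ^ (n + 1) - 1 + 1 = 2 ^ (n + 1) := Nat.sub_add_cancel Nat.one_le_two_pow
  have hgrow : 1 < ∑ i ∈ range (2 ^ (n + 1)), (τ (i + 1) : ℝ) / Q n ^ (i + 1) := by
    have := sum_range_lt_sum_range_of_ne_zero (d := fun i => τ (i + 1)) (N := 2 ^ n)
      (k := 2 ^ (n + 1) - 1) (by rw [pow_succ]; omega)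
      (by simp only [hlast, hτ.apply_two_pow]; omega) (one_pos.trans hQn)
    rwa [hlast, ← hsum] at this
  exact ((hτ.strictAntiOn_sum_range (by positivity)).lt_iff_gt (one_pos.trans hQn')
    (one_pos.trans hQn)).1 (hsum'.symm.trans_lt hgrow)

lemma IsBaseSeq.le_of_isKL (hτ : IsThueMorse τ) (hKL : IsKL τ qKL) (hQ : IsBaseSeq τ Q) {n : ℕ}
    (hn : 1 ≤ n) : Q n ≤ qKL := by
  obtain ⟨hQn, -, hsum⟩ := hQ.2 n hn
  have hKL0 : 0 < qKL := one_pos.trans hKL.1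
  have hpartial : ∑ i ∈ range (2 ^ n), (τ (i + 1) : ℝ) / qKL ^ (i + 1) ≤ 1 :=
    ((summable_natCast_div_pow (d := fun i => τ (i + 1)) (fun i => hτ.le_one _) hKL.1).sum_le_tsum
      _ fun _ _ => by positivity).trans_eq hKL.2.2.symm
  exact ((hτ.strictAntiOn_sum_range (by positivity)).le_iff_ge hKL0 (one_pos.trans hQn)).1
    (hsum ▸ hpartial)

lemma IsBaseSeq.sum_range_le_one (hτ : IsThueMorse τ) (hQ : IsBaseSeq τ Q) {n : ℕ} (hn : 1 ≤ n)
    (hq : Q n ≤ q) : ∑ i ∈ range (2 ^ n), (τ (i + 1) : ℝ) / q ^ (i + 1) ≤ 1 := by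
  obtain ⟨hQn, -, hsum⟩ := hQ.2 n hn
  exact ((hτ.strictAntiOn_sum_range (by positivity)).antitoneOn (one_pos.trans hQn)
    (one_pos.trans (hQn.trans_le hq)) hq).trans_eq hsum.symm

lemma IsKL.le_of_eventually_sum_range_le_one (hτ : IsThueMorse τ) (hKL : IsKL τ qKL) (hq : 1 < q)
    (h : ∀ᶠ n in atTop, ∑ i ∈ range (2 ^ n), (τ (i + 1) : ℝ) / q ^ (i + 1) ≤ 1) : qKL ≤ q := by
  have hs := summable_natCast_div_pow (d := fun i => τ (i + 1)) (fun i => hτ.le_one _) hq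
  have hval : seqVal q (fun i => τ (i + 1)) ≤ 1 :=
    le_of_tendsto (hs.hasSum.tendsto_sum_nat.comp (tendsto_pow_atTop_atTop_of_one_lt one_lt_two)) h
  have hanti := strictAntiOn_seqVal (k := 0) (fun i => hτ.le_one (i + 1)) (by simp [hτ.apply_one])
  exact (hanti.le_iff_ge hq hKL.1).1 (hval.trans_eq hKL.2.2)

end BaseSeq

/-- `(q_n)_{n≥1}` is strictly increasing and converges to `q_KL`. -/
theorem baseSeq_strictMono_tendsto (τ : ℕ → ℕ) (hτ : IsThueMorse τ)
    (qKL : ℝ) (hKL : IsKL τ qKL) (Q : ℕ → ℝ) (hQ : IsBaseSeq τ Q) :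
    StrictMono (fun n => Q (n + 1)) ∧
      Tendsto (fun n => Q (n + 1)) atTop (nhds qKL) := by
  have hmono : StrictMono fun n => Q (n + 1) :=
    strictMono_nat_of_lt_succ fun n => hQ.lt_succ hτ (by omega)
  have hbdd : BddAbove (range fun n => Q (n + 1)) :=
    ⟨qKL, forall_mem_range.2 fun n => hQ.le_of_isKL hτ hKL (by omega)⟩
  have hlim := tendsto_atTop_ciSup hmono.monotone hbdd
  have hsup_le : ⨆ n, Q (n + 1) ≤ qKL := ciSup_le fun n => hQ.le_of_isKL hτ hKL n.succ_pos
  have hle_sup : qKL ≤ ⨆ n, Q (n + 1) := by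
    refine hKL.le_of_eventually_sum_range_le_one hτ
      ((hQ.2 1 le_rfl).1.trans_le (le_ciSup hbdd 0)) ?_
    filter_upwards [eventually_ge_atTop 1] with n hn
    obtain ⟨m, rfl⟩ := Nat.exists_eq_add_of_le' hn
    exact hQ.sum_range_le_one hτ hn (le_ciSup hbdd m)
  exact ⟨hmono, le_antisymm hsup_le hle_sup ▸ hlim⟩
end
end

section
/- For any 1 < p < q < 2, U_p' ⊆ U_q'; that is, every sequence in {0,1}^ℕ that is the unique p-expansion of its value is also the unique q-expansion of its value. -/
open Filter Topology

noncomputable section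

/-! A digit sequence `d` is the unique `q`-expansion of its value exactly when every digit `0`
is followed by a tail of value `< 1` and every digit `1` by a reflected tail of value `< 1`:
otherwise the digit can be flipped and the remaining value re-expanded (greedily, which is
possible because `q ≤ 2`). Tail values only decrease when the base grows, so this criterion
passes from `p` to any larger `q`. -/

section Expansions

variable {p q : ℝ} {d e : ℕ → ℕ}

theorem hasSum_one_div_pow_succ (hq : 1 < q) :
    HasSum (fun i : ℕ => 1 / q ^ (i + 1)) (1 / (q - 1)) := by
  have hterm : (fun i : ℕ => 1 / q ^ (i + 1)) = fun i => q⁻¹ * q⁻¹ ^ i := by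
    ext i
    rw [pow_succ', one_div, mul_inv, inv_pow]
  have hsum : 1 / (q - 1) = q⁻¹ * (1 - q⁻¹)⁻¹ := by
    field_simp [(show (0 : ℝ) < q - 1 by linarith).ne']
  rw [hterm, hsum]
  exact (hasSum_geometric_of_lt_one (by positivity) (inv_lt_one_of_one_lt₀ hq)).mul_left q⁻¹

theorem summable_digits (hq : 1 < q) (hd : ∀ i, d i ≤ 1) :
    Summable fun i : ℕ => (d i : ℝ) / q ^ (i + 1) :=
  (hasSum_one_div_pow_succ hq).summable.of_nonneg_of_le (fun i => by positivity)
    fun i => by gcongr; exact_mod_cast hd i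

theorem seqVal_nonneg (hq : 0 ≤ q) : 0 ≤ seqVal q d :=
  tsum_nonneg fun i => by positivity

theorem seqVal_le (hq : 1 < q) (hd : ∀ i, d i ≤ 1) : seqVal q d ≤ 1 / (q - 1) :=
  hasSum_le (fun i => by gcongr; exact_mod_cast hd i) (summable_digits hq hd).hasSum
    (hasSum_one_div_pow_succ hq)

theorem seqVal_antitone_base (hp : 1 < p) (hpq : p ≤ q) (hd : ∀ i, d i ≤ 1) :
    seqVal q d ≤ seqVal p d :=
  (summable_digits (hp.trans_le hpq) hd).tsum_le_tsum (fun i => by gcongr)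
    (summable_digits hp hd)

theorem seqVal_add_seqVal_reflect (hq : 1 < q) (hd : ∀ i, d i ≤ 1) :
    seqVal q d + seqVal q (fun i => 1 - d i) = 1 / (q - 1) := by
  rw [seqVal, seqVal, ← (summable_digits hq hd).tsum_add
    (summable_digits hq fun i => Nat.sub_le _ _), (hasSum_one_div_pow_succ hq).tsum_eq.symm]
  refine tsum_congr fun i => ?_
  rw [Nat.cast_sub (hd i), ← add_div]
  ring_nf

theorem seqVal_shift (hq : 1 < q) (hd : ∀ i, d i ≤ 1) (n : ℕ) :
    seqVal q (fun i => d (n + i)) = (d n + seqVal q fun i => d (n + 1 + i)) / q := by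
  rw [seqVal, (summable_digits hq fun i => hd (n + i)).tsum_eq_zero_add, seqVal,
    add_div, ← tsum_div_const]
  congr 1
  · simp
  · refine tsum_congr fun i => ?_
    rw [add_assoc n 1 i, add_comm 1 i, pow_succ _ (i + 1), div_div]

theorem seqVal_eq_seqVal_iff_of_eq_of_lt (hq : 1 < q) (hd : ∀ i, d i ≤ 1)
    (he : ∀ i, e i ≤ 1) {n : ℕ} (h : ∀ i < n, d i = e i) :
    seqVal q d = seqVal q e ↔
      seqVal q (fun i => d (n + i)) = seqVal q fun i => e (n + i) := by
  induction n with
  | zero => simp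
  | succ n ih =>
    rw [ih fun i hi => h i (by omega), seqVal_shift hq hd, seqVal_shift hq he, h n (by omega),
      div_left_inj' (by positivity), add_right_inj]

end Expansions

section Greedy

variable {q x : ℝ}

def greedySum (q x : ℝ) : ℕ → ℝ
  | 0 => 0
  | n + 1 =>
    if greedySum q x n + 1 / q ^ (n + 1) ≤ x then greedySum q x n + 1 / q ^ (n + 1)
    else greedySum q x n

def greedyDigit (q x : ℝ) (n : ℕ) : ℕ :=
  if greedySum q x n + 1 / q ^ (n + 1) ≤ x then 1 else 0

theorem greedyDigit_le_one (n : ℕ) : greedyDigit q x n ≤ 1 := by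
  unfold greedyDigit
  split <;> simp

theorem sum_range_greedyDigit (n : ℕ) :
    ∑ i ∈ Finset.range n, (greedyDigit q x i : ℝ) / q ^ (i + 1) = greedySum q x n := by
  induction n with
  | zero => simp [greedySum]
  | succ n ih =>
    rw [Finset.sum_range_succ, ih, greedySum, greedyDigit]
    split <;> simp

theorem greedySum_mem_Icc (hq1 : 1 < q) (hq2 : q ≤ 2) (hx0 : 0 ≤ x) (hx1 : x ≤ 1 / (q - 1))
    (n : ℕ) : greedySum q x n ∈ Set.Icc (x - 1 / (q ^ n * (q - 1))) x := by
  induction n with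
  | zero => simpa [greedySum, sub_nonpos] using ⟨one_div (q - 1) ▸ hx1, hx0⟩
  | succ n ih =>
    have hq : 0 < q - 1 := by linarith
    have hstep : 1 / (q ^ n * (q - 1)) = 1 / q ^ (n + 1) + 1 / (q ^ (n + 1) * (q - 1)) := by
      field_simp
      ring
    -- a skipped digit leaves a gap `< q^-(n+1) ≤ q^-(n+1)/(q-1)`, as `q ≤ 2`
    have hskip : 1 / q ^ (n + 1) ≤ 1 / (q ^ (n + 1) * (q - 1)) :=
      one_div_le_one_div_of_le (by positivity) (mul_le_of_le_one_right (by positivity)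
        (by linarith))
    obtain ⟨ih_lo, ih_hi⟩ := ih
    rw [greedySum]
    split_ifs with h
    · exact ⟨by linarith, h⟩
    · exact ⟨by linarith, ih_hi⟩

theorem hasSum_greedyDigit (hq1 : 1 < q) (hq2 : q ≤ 2) (hx0 : 0 ≤ x) (hx1 : x ≤ 1 / (q - 1)) :
    HasSum (fun i => (greedyDigit q x i : ℝ) / q ^ (i + 1)) x := by
  rw [hasSum_iff_tendsto_nat_of_nonneg (fun i => by positivity)]
  simp only [sum_range_greedyDigit]
  have hgap : Tendsto (fun n : ℕ => 1 / (q ^ n * (q - 1))) atTop (𝓝 0) :=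
    tendsto_const_nhds.div_atTop
      ((tendsto_pow_atTop_atTop_of_one_lt hq1).atTop_mul_const (by linarith))
  have hlo : Tendsto (fun n : ℕ => x - 1 / (q ^ n * (q - 1))) atTop (𝓝 x) := by
    simpa using tendsto_const_nhds.sub hgap
  exact tendsto_of_tendsto_of_tendsto_of_le_of_le hlo tendsto_const_nhds
    (fun n => (greedySum_mem_Icc hq1 hq2 hx0 hx1 n).1)
    fun n => (greedySum_mem_Icc hq1 hq2 hx0 hx1 n).2

theorem exists_isExpansion (hq1 : 1 < q) (hq2 : q ≤ 2) (hx0 : 0 ≤ x) (hx1 : x ≤ 1 / (q - 1)) :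
    ∃ c, IsExpansion q x c :=
  ⟨greedyDigit q x, fun _ => greedyDigit_le_one _,
    (hasSum_greedyDigit hq1 hq2 hx0 hx1).tsum_eq.symm⟩

end Greedy

section Criterion

variable {p q : ℝ} {d e : ℕ → ℕ}

def UnivoqueCond (q : ℝ) (d : ℕ → ℕ) : Prop :=
  ∀ n, (d n = 0 → seqVal q (fun i => d (n + 1 + i)) < 1) ∧
    (d n = 1 → seqVal q (fun i => 1 - d (n + 1 + i)) < 1)

theorem UnivoqueCond.mono (hp : 1 < p) (hpq : p ≤ q) (hd : ∀ i, d i ≤ 1)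
    (h : UnivoqueCond p d) : UnivoqueCond q d := fun n =>
  ⟨fun h0 => (seqVal_antitone_base hp hpq fun _ => hd _).trans_lt ((h n).1 h0),
    fun h1 => (seqVal_antitone_base hp hpq fun _ => Nat.sub_le _ _).trans_lt ((h n).2 h1)⟩

theorem digit_add_seqVal_tail_eq (hq : 1 < q) (hd : ∀ i, d i ≤ 1) (he : ∀ i, e i ≤ 1)
    (hval : seqVal q d = seqVal q e) {n : ℕ} (h : ∀ i < n, d i = e i) :
    (d n : ℝ) + seqVal q (fun i => d (n + 1 + i)) = e n + seqVal q fun i => e (n + 1 + i) := by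
  have htail := (seqVal_eq_seqVal_iff_of_eq_of_lt hq hd he h).1 hval
  rwa [seqVal_shift hq hd, seqVal_shift hq he, div_left_inj' (by positivity)] at htail

theorem exists_isExpansion_digit_eq (hq1 : 1 < q) (hq2 : q ≤ 2) (hd : ∀ i, d i ≤ 1)
    {n b : ℕ} (hb : b ≤ 1) {y : ℝ} (hy0 : 0 ≤ y) (hy1 : y ≤ 1 / (q - 1))
    (hval : (b : ℝ) + y = d n + seqVal q fun i => d (n + 1 + i)) :
    ∃ e, IsExpansion q (seqVal q d) e ∧ e n = b := by
  obtain ⟨c, hc, rfl⟩ := exists_isExpansion hq1 hq2 hy0 hy1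
  let e : ℕ → ℕ := fun i => if i < n then d i else if i = n then b else c (i - (n + 1))
  have he : ∀ i, e i ≤ 1 := fun i => by
    dsimp only [e]
    split_ifs
    exacts [hd i, hb, hc _]
  have hen : e n = b := by simp [e]
  have htail : (fun i => e (n + 1 + i)) = c := by
    ext i
    simp only [e, if_neg (show ¬n + 1 + i < n by omega), if_neg (show n + 1 + i ≠ n by omega),
      Nat.add_sub_cancel_left]
  refine ⟨e, ⟨he, ?_⟩, hen⟩
  rw [seqVal_eq_seqVal_iff_of_eq_of_lt hq1 hd he (n := n) fun i hi => by simp [e, hi],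
    seqVal_shift hq1 hd, seqVal_shift hq1 he, hen, htail, hval]

theorem univoqueCond_of_mem_USeq (hq1 : 1 < q) (hq2 : q ≤ 2) (hmem : d ∈ USeq q) :
    UnivoqueCond q d := by
  obtain ⟨hd, huniq⟩ := hmem
  intro n
  have htail0 : 0 ≤ seqVal q fun i => d (n + 1 + i) := seqVal_nonneg (by linarith)
  have htail1 : seqVal q (fun i => d (n + 1 + i)) ≤ 1 / (q - 1) := seqVal_le hq1 fun _ => hd _
  have hsum := seqVal_add_seqVal_reflect hq1 fun i => hd (n + 1 + i)
  constructor
  · intro h0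
    by_contra! htail
    obtain ⟨e, he, hen⟩ := exists_isExpansion_digit_eq hq1 hq2 hd le_rfl
      (y := (seqVal q fun i => d (n + 1 + i)) - 1) (by linarith) (by linarith)
      (by rw [h0]; push_cast; ring)
    rw [huniq e he] at hen
    omega
  · intro h1
    by_contra! hrefl
    obtain ⟨e, he, hen⟩ := exists_isExpansion_digit_eq hq1 hq2 hd zero_le_one
      (y := (seqVal q fun i => d (n + 1 + i)) + 1) (by linarith) (by linarith)
      (by rw [h1]; push_cast; ring)
    rw [huniq e he] at hen
    omega

theorem mem_USeq_of_univoqueCond (hq : 1 < q) (hd : ∀ i, d i ≤ 1) (hcond : UnivoqueCond q d) :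
    d ∈ USeq q := by
  refine ⟨hd, fun e ⟨he, hval⟩ => funext fun n => ?_⟩
  induction n using Nat.strong_induction_on with
  | _ n ih =>
    have hkey := digit_add_seqVal_tail_eq hq hd he hval fun i hi => (ih i hi).symm
    have hd_tail0 : 0 ≤ seqVal q fun i => d (n + 1 + i) := seqVal_nonneg (by linarith)
    have he_tail0 : 0 ≤ seqVal q fun i => e (n + 1 + i) := seqVal_nonneg (by linarith)
    have he_tail1 : seqVal q (fun i => e (n + 1 + i)) ≤ 1 / (q - 1) := seqVal_le hq fun _ => he _
    have hsum := seqVal_add_seqVal_reflect hq fun i => hd (n + 1 + i)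
    rcases Nat.le_one_iff_eq_zero_or_eq_one.1 (hd n) with hdn | hdn <;>
      rcases Nat.le_one_iff_eq_zero_or_eq_one.1 (he n) with hen | hen
    · rw [hdn, hen]
    · have := (hcond n).1 hdn
      rw [hdn, hen] at hkey
      push_cast at hkey
      linarith
    · have := (hcond n).2 hdn
      rw [hdn, hen] at hkey
      push_cast at hkey
      linarith
    · rw [hdn, hen]

theorem mem_USeq_iff (hq1 : 1 < q) (hq2 : q ≤ 2) :
    d ∈ USeq q ↔ (∀ i, d i ≤ 1) ∧ UnivoqueCond q d :=
  ⟨fun h => ⟨h.1, univoqueCond_of_mem_USeq hq1 hq2 h⟩,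
    fun h => mem_USeq_of_univoqueCond hq1 h.1 h.2⟩

end Criterion

/-- For `1 < p < q < 2`, `U_p' ⊆ U_q'`. -/
theorem USeq_mono (p q : ℝ) (hp : 1 < p) (hpq : p < q) (hq : q < 2) :
    USeq p ⊆ USeq q := by
  intro d hd
  obtain ⟨hdigits, hcond⟩ := (mem_USeq_iff hp (hpq.trans hq).le).1 hd
  exact (mem_USeq_iff (hp.trans hpq) hq.le).2 ⟨hdigits, hcond.mono hp hpq.le hdigits⟩
end
end
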